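/- arXiv:2212.01848 — 8 statements merged into one kernel-verified Lean document; each statement's English description precedes it below -/
import Mathlib

section
/- Let f_1, …, f_P : ℝ^n → ℝ be continuously differentiable and suppose there is L > 0 such that each gradient ∇f_p is L-Lipschitz continuous; set f = ∑_{p=1}^P f_p. Let {w^k} ⊂ ℝ^n be a bounded sequence and {ζ^k} ⊂ (0, ∞) with ζ^k → 0. For each k let (h_1^k, …, h_P^k) be a permutation of {1, …, P}, define w̃_0^k = w^k and w̃_i^k = w̃_{i−1}^k − ζ^k ∇f_{h_i^k}(w̃_{i−1}^k) for i = 1, …, P, and set d^k = −∑_{i=1}^P ∇f_{h_i^k}(w̃_{i−1}^k). Then for every limit point w̄ of {w^k} there exists a strictly increasing map φ : ℕ → ℕ such that: w^{φ(k)} → w̄, ζ^{φ(k)} → 0, w̃_i^{φ(k)} → w̄ for every i = 1, …, P, and d^{φ(k)} → −∇f(w̄). -/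
open Filter Finset

/-!
Along a subsequence with `w^k → w̄`, each inner step moves the iterate by `ζ^k` times a gradient
value that stays bounded, because the finitely many gradients are continuous at `w̄`; induction
on `i` gives `w̃_i^k → w̄`. The direction `-d^k` then approaches `∑_i ∇f_{h_i^k}(w̄)`, and since
`h^k` is a permutation this sum is `∇f(w̄)` for every `k`.
-/

open scoped Topology

section Gradient

variable {𝕜 F : Type*} [RCLike 𝕜] [NormedAddCommGroup F] [InnerProductSpace 𝕜 F] [CompleteSpace F]

theorem ContDiff.continuous_gradient {f : F → 𝕜} (hf : ContDiff 𝕜 1 f) : Continuous (gradient f) :=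
  (InnerProductSpace.toDual 𝕜 F).symm.continuous.comp (hf.continuous_fderiv one_ne_zero)

theorem gradient_fun_sum {ι : Type*} {s : Finset ι} {f : ι → F → 𝕜} {x : F}
    (hf : ∀ i ∈ s, DifferentiableAt 𝕜 (f i) x) :
    gradient (fun y => ∑ i ∈ s, f i y) x = ∑ i ∈ s, gradient (f i) x := by
  apply (InnerProductSpace.toDual 𝕜 F).injective
  rw [map_sum, toDual_gradient, fderiv_fun_sum hf]
  simp only [toDual_gradient]

end Gradient

section Convergence

variable {α ι E : Type*} [Fintype ι] [SeminormedAddCommGroup E] {l : Filter α}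

theorem Filter.Tendsto.apply_sub_apply {u : α → ι → E} {a : ι → E}
    (hu : Tendsto u l (𝓝 a)) (q : α → ι) :
    Tendsto (fun x => u x (q x) - a (q x)) l (𝓝 0) :=
  tendsto_zero_iff_norm_tendsto_zero.2 <| squeeze_zero (fun _ => norm_nonneg _)
    (fun x => norm_le_pi_norm (u x - a) (q x)) (tendsto_iff_norm_sub_tendsto_zero.1 hu)

theorem Filter.Tendsto.sub_smul_apply [NormedSpace ℝ E] {x : α → E} {a : E}
    (hx : Tendsto x l (𝓝 a)) {G : E → ι → E} (hG : ContinuousAt G a)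
    {ζ : α → ℝ} (hζ : Tendsto ζ l (𝓝 0)) (q : α → ι) :
    Tendsto (fun k => x k - ζ k • G (x k) (q k)) l (𝓝 a) := by
  have hGx : Tendsto (fun k => G (x k)) l (𝓝 (G a)) := hG.tendsto.comp hx
  have hbdd : IsBoundedUnder (· ≤ ·) l (fun k => ‖G (x k) (q k)‖) :=
    isBoundedUnder_of_eventually_le (a := ‖G a‖ + 1) <|
      (hGx.norm.eventually (gt_mem_nhds (lt_add_one _))).mono fun k hk =>
        (norm_le_pi_norm _ _).trans hk.le
  simpa using hx.sub (hζ.zero_smul_isBoundedUnder_le hbdd)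

theorem tendsto_iterate_sub_smul_apply [NormedSpace ℝ E] {G : E → ι → E} {a : E}
    (hG : ContinuousAt G a) {ζ : α → ℝ} (hζ : Tendsto ζ l (𝓝 0))
    {q : α → ℕ → ι} {x : α → ℕ → E} {P : ℕ} (h0 : Tendsto (fun k => x k 0) l (𝓝 a))
    (hstep : ∀ k, ∀ i < P, x k (i + 1) = x k i - ζ k • G (x k i) (q k i)) :
    ∀ i ≤ P, Tendsto (fun k => x k i) l (𝓝 a) := by
  intro i
  induction i with
  | zero => exact fun _ => h0
  | succ i ih =>
    intro hi
    have hiP : i < P := hi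
    simpa only [hstep _ i hiP] using (ih hiP.le).sub_smul_apply hG hζ (fun k => q k i)

theorem tendsto_sum_range_apply_of_bijective {P : ℕ} {u : α → ℕ → ι → E} {a : ι → E}
    (hu : ∀ i < P, Tendsto (fun k => u k i) l (𝓝 a))
    {h : α → ℕ → ι} (hh : ∀ k, Function.Bijective (fun i : Fin P => h k i.val)) :
    Tendsto (fun k => ∑ i ∈ range P, u k i (h k i)) l (𝓝 (∑ j, a j)) := by
  have hsum_a : ∀ k, ∑ i ∈ range P, a (h k i) = ∑ j, a j := fun k => by
    rw [← Fin.sum_univ_eq_sum_range (fun i => a (h k i))]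
    exact Fintype.sum_bijective _ (hh k) _ _ fun _ => rfl
  have herr : Tendsto (fun k => ∑ i ∈ range P, (u k i (h k i) - a (h k i))) l (𝓝 0) := by
    simpa using tendsto_finsetSum (range P) fun i hi =>
      (hu i (mem_range.1 hi)).apply_sub_apply (fun k => h k i)
  simpa [sum_sub_distrib, hsum_a] using herr.add_const (∑ j, a j)

end Convergence

theorem stmt_2_general {n P : ℕ}
    (f : Fin P → EuclideanSpace ℝ (Fin n) → ℝ)
    (hf : ∀ p, ContDiff ℝ 1 (f p))
    (w : ℕ → EuclideanSpace ℝ (Fin n))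
    (ζ : ℕ → ℝ)
    (hζto0 : Tendsto ζ atTop (nhds 0))
    (h : ℕ → ℕ → Fin P)
    (hperm : ∀ k, Function.Bijective (fun i : Fin P => h k i.val))
    (wt : ℕ → ℕ → EuclideanSpace ℝ (Fin n))
    (hinit : ∀ k, wt k 0 = w k)
    (hiter : ∀ k, ∀ i, i < P →
      wt k (i + 1) = wt k i - ζ k • gradient (f (h k i)) (wt k i))
    (d : ℕ → EuclideanSpace ℝ (Fin n))
    (hd : ∀ k, d k = -∑ i ∈ Finset.range P, gradient (f (h k i)) (wt k i))
    (wbar : EuclideanSpace ℝ (Fin n))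
    (hwbar : ∃ ψ : ℕ → ℕ, StrictMono ψ ∧
      Tendsto (fun k => w (ψ k)) atTop (nhds wbar)) :
    ∃ φ : ℕ → ℕ, StrictMono φ ∧
      Tendsto (fun k => w (φ k)) atTop (nhds wbar) ∧
      Tendsto (fun k => ζ (φ k)) atTop (nhds 0) ∧
      (∀ i, 1 ≤ i → i ≤ P →
        Tendsto (fun k => wt (φ k) i) atTop (nhds wbar)) ∧
      Tendsto (fun k => d (φ k)) atTop
        (nhds (-gradient (fun x => ∑ p : Fin P, f p x) wbar)) := by
  obtain ⟨ψ, hψ, hwψ⟩ := hwbar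
  have hG : Continuous fun x (p : Fin P) => gradient (f p) x :=
    continuous_pi fun p => (hf p).continuous_gradient
  have hζψ : Tendsto (fun k => ζ (ψ k)) atTop (𝓝 0) := hζto0.comp hψ.tendsto_atTop
  have hwt : ∀ i ≤ P, Tendsto (fun k => wt (ψ k) i) atTop (𝓝 wbar) :=
    tendsto_iterate_sub_smul_apply hG.continuousAt hζψ (by simpa only [hinit] using hwψ)
      fun k => hiter (ψ k)
  refine ⟨ψ, hψ, hwψ, hζψ, fun i _ hi => hwt i hi, ?_⟩
  rw [gradient_fun_sum fun p _ => ((hf p).differentiable one_ne_zero).differentiableAt]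
  simpa only [hd] using (tendsto_sum_range_apply_of_bijective (h := fun k => h (ψ k))
    (u := fun k i p => gradient (f p) (wt (ψ k) i))
    (fun i hi => (hG.tendsto wbar).comp (hwt i hi.le)) fun k => hperm (ψ k)).neg

/-- Proposition `limtildew_general`.
If `{w^k}` is bounded and `ζ^k → 0`, then for every limit point `w̄` of `{w^k}`
there is a subsequence along which `w^k → w̄`, `ζ^k → 0`, all the inner iterates
`w̃_i^k → w̄` (`i = 1, …, P`), and the directions `d^k → -∇f(w̄)`, where
`f = ∑_{p=1}^P f_p`. -/
theorem stmt_2 {n P : ℕ}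
    (f : Fin P → EuclideanSpace ℝ (Fin n) → ℝ)
    (hf : ∀ p, ContDiff ℝ 1 (f p))
    (L : ℝ) (hL : 0 < L)
    (hlip : ∀ p (u v : EuclideanSpace ℝ (Fin n)),
      ‖gradient (f p) u - gradient (f p) v‖ ≤ L * ‖u - v‖)
    (w : ℕ → EuclideanSpace ℝ (Fin n)) (hwbdd : ∃ C, ∀ k, ‖w k‖ ≤ C)
    (ζ : ℕ → ℝ) (hζpos : ∀ k, 0 < ζ k)
    (hζto0 : Tendsto ζ atTop (nhds 0))
    (h : ℕ → ℕ → Fin P)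
    (hperm : ∀ k, Function.Bijective (fun i : Fin P => h k i.val))
    (wt : ℕ → ℕ → EuclideanSpace ℝ (Fin n))
    (hinit : ∀ k, wt k 0 = w k)
    (hiter : ∀ k, ∀ i, i < P →
      wt k (i + 1) = wt k i - ζ k • gradient (f (h k i)) (wt k i))
    (d : ℕ → EuclideanSpace ℝ (Fin n))
    (hd : ∀ k, d k = -∑ i ∈ Finset.range P, gradient (f (h k i)) (wt k i))
    (wbar : EuclideanSpace ℝ (Fin n))
    (hwbar : ∃ ψ : ℕ → ℕ, StrictMono ψ ∧
      Tendsto (fun k => w (ψ k)) atTop (nhds wbar)) :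
    ∃ φ : ℕ → ℕ, StrictMono φ ∧
      Tendsto (fun k => w (φ k)) atTop (nhds wbar) ∧
      Tendsto (fun k => ζ (φ k)) atTop (nhds 0) ∧
      (∀ i, 1 ≤ i → i ≤ P →
        Tendsto (fun k => wt (φ k) i) atTop (nhds wbar)) ∧
      Tendsto (fun k => d (φ k)) atTop
        (nhds (-gradient (fun x => ∑ p : Fin P, f p x) wbar)) :=
  stmt_2_general f hf w ζ hζto0 h hperm wt hinit hiter d hd wbar hwbar
end

section
/- Let f : ℝ^n → ℝ be continuous and coercive (f(x) → +∞ as ‖x‖ → +∞). Let w, d ∈ ℝ^n with d ≠ 0, let ζ > 0, γ ∈ (0,1) and δ ∈ (0,1), and suppose the initial sufficient decrease condition f(w + ζ d) ≤ f(w) − γ ζ ‖d‖² holds. Then there exist j ∈ ℕ and α = ζ/δ^j (so α ≥ ζ) such that f(w + α d) ≤ f(w) − γ α ‖d‖² and f(w + (α/δ) d) > min{ f(w) − γ (α/δ) ‖d‖², f(w + α d) }. In particular, the Extrapolation Derivative-Free Linesearch is well defined and its output stepsize α satisfies the sufficient decrease condition f(w + α d) ≤ f(w) − γ α ‖d‖².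 -/
open Filter

/-- well-definedness of the EDFL, Lemma `EDFL:welldefined`.
If `f` is continuous and coercive, `d ≠ 0`, `γ, δ ∈ (0,1)` and the initial
sufficient decrease `f(w + ζ d) ≤ f(w) - γ ζ ‖d‖²` holds, then there exist
`j ∈ ℕ` and `α = ζ/δ^j ≥ ζ` with `f(w + α d) ≤ f(w) - γ α ‖d‖²` and
`f(w + (α/δ) d) > min{f(w) - γ (α/δ) ‖d‖², f(w + α d)}`. -/
theorem stmt_5 {n : ℕ}
    (f : EuclideanSpace ℝ (Fin n) → ℝ)
    (hfc : Continuous f)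
    (hcoer : Tendsto f (Filter.comap norm Filter.atTop) Filter.atTop)
    (w d : EuclideanSpace ℝ (Fin n)) (hd : d ≠ 0)
    (ζ : ℝ) (hζ : 0 < ζ)
    (γ : ℝ) (hγ : γ ∈ Set.Ioo (0 : ℝ) 1)
    (δ : ℝ) (hδ : δ ∈ Set.Ioo (0 : ℝ) 1)
    (hinit : f (w + ζ • d) ≤ f w - γ * ζ * ‖d‖ ^ 2) :
    ∃ j : ℕ, ζ ≤ ζ / δ ^ j ∧
      f (w + (ζ / δ ^ j) • d) ≤ f w - γ * (ζ / δ ^ j) * ‖d‖ ^ 2 ∧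
      f (w + (ζ / δ ^ j / δ) • d) >
        min (f w - γ * (ζ / δ ^ j / δ) * ‖d‖ ^ 2) (f (w + (ζ / δ ^ j) • d)) := by
  obtain ⟨hγ0, hγ1⟩ := hγ
  obtain ⟨hδ0, hδ1⟩ := hδ
  have hap : ∀ j : ℕ, 0 < ζ / δ ^ j := fun j => div_pos hζ (pow_pos hδ0 j)
  have hle : ∀ j : ℕ, ζ ≤ ζ / δ ^ j := by
    intro j
    rw [le_div_iff₀ (pow_pos hδ0 j)]
    nlinarith [pow_le_one₀ hδ0.le hδ1.le (n := j)]
  have hstep : ∀ j : ℕ, ζ / δ ^ j / δ = ζ / δ ^ (j + 1) := by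
    intro j; rw [pow_succ, div_div]
  by_contra hcon
  push_neg at hcon
  have hdec : ∀ j : ℕ, f (w + (ζ / δ ^ j) • d) ≤ f w - γ * (ζ / δ ^ j) * ‖d‖ ^ 2 := by
    intro j
    induction j with
    | zero => simpa using hinit
    | succ k ih =>
      have h := hcon k (hle k) ih
      rw [hstep k] at h
      exact h.trans (min_le_left _ _)
  -- a j → ∞
  have hatop : Tendsto (fun j : ℕ => ζ / δ ^ j) atTop atTop := by
    have h1 : Tendsto (fun j : ℕ => (δ⁻¹) ^ j) atTop atTop :=
      tendsto_pow_atTop_atTop_of_one_lt ((one_lt_inv₀ hδ0).2 hδ1)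
    have := h1.const_mul_atTop hζ
    refine this.congr fun j => ?_
    rw [inv_pow, mul_comm, inv_mul_eq_div]
  have hnorm : Tendsto (fun j : ℕ => w + (ζ / δ ^ j) • d) atTop (Filter.comap norm Filter.atTop) := by
    rw [tendsto_comap_iff]
    apply tendsto_atTop_mono (f := fun j : ℕ => (ζ / δ ^ j) * ‖d‖ - ‖w‖)
    · intro j
      have h1 : ‖(ζ / δ ^ j) • d‖ - ‖w‖ ≤ ‖w + (ζ / δ ^ j) • d‖ := by
        have := norm_sub_norm_le ((ζ / δ ^ j) • d) (-w)
        simp only [norm_neg] at this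
        calc ‖(ζ / δ ^ j) • d‖ - ‖w‖ ≤ ‖(ζ / δ ^ j) • d - -w‖ := this
          _ = ‖w + (ζ / δ ^ j) • d‖ := by rw [sub_neg_eq_add, add_comm]
      rw [norm_smul, Real.norm_eq_abs, abs_of_pos (hap j)] at h1
      simpa using h1
    · apply tendsto_atTop_add_const_right
      exact hatop.atTop_mul_const (norm_pos_iff.mpr hd)
  have hT : Tendsto (fun j : ℕ => f (w + (ζ / δ ^ j) • d)) atTop atTop := hcoer.comp hnorm
  obtain ⟨j, hj⟩ := (hT.eventually (eventually_gt_atTop (f w))).exists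
  have : f w - γ * (ζ / δ ^ j) * ‖d‖ ^ 2 ≤ f w := by
    nlinarith [hap j, sq_nonneg ‖d‖, norm_pos_iff.mpr hd, mul_pos (mul_pos hγ0 (hap j)) (pow_pos (norm_pos_iff.mpr hd) 2)]
  linarith [hdec j]
end

section
/- Let f : ℝ^n → ℝ be continuous and coercive (f(x) → +∞ as ‖x‖ → +∞). Let w, d ∈ ℝ^n with d ≠ 0, let R ∈ ℝ, ζ > 0, γ ∈ (0,1) and δ ∈ (0,1). Then there exists j ∈ ℕ such that f(w + (ζ/δ^j) d) > R − γ (ζ/δ^j)² ‖d‖². Consequently, the while loop of the Nonmonotone Extrapolation Derivative-Free Linesearch, which keeps enlarging the step as long as f(w + (ζ/δ^j) d) ≤ R − γ (ζ/δ^j)² ‖d‖², terminates after finitely many iterations. -/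
open Filter

/-- finite termination of the NMEDFL while loop.
If `f` is continuous and coercive, `d ≠ 0`, `ζ > 0`, `γ, δ ∈ (0,1)` and `R ∈ ℝ`,
then there is some `j` with `f(w + (ζ/δ^j) d) > R - γ (ζ/δ^j)² ‖d‖²`, i.e. the
extrapolation loop of the NMEDFL terminates after finitely many iterations. -/
theorem stmt_6 {n : ℕ}
    (f : EuclideanSpace ℝ (Fin n) → ℝ)
    (hfc : Continuous f)
    (hcoer : Tendsto f (Filter.comap norm Filter.atTop) Filter.atTop)
    (w d : EuclideanSpace ℝ (Fin n)) (hd : d ≠ 0)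
    (R : ℝ)
    (ζ : ℝ) (hζ : 0 < ζ)
    (γ : ℝ) (hγ : γ ∈ Set.Ioo (0 : ℝ) 1)
    (δ : ℝ) (hδ : δ ∈ Set.Ioo (0 : ℝ) 1) :
    ∃ j : ℕ, f (w + (ζ / δ ^ j) • d) > R - γ * (ζ / δ ^ j) ^ 2 * ‖d‖ ^ 2 := by
  obtain ⟨hδ0, hδ1⟩ := hδ
  -- stepsizes tend to infinity
  have ht : Tendsto (fun j : ℕ => ζ / δ ^ j) atTop atTop := by
    have h1 : Tendsto (fun j : ℕ => (δ⁻¹) ^ j) atTop atTop :=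
      tendsto_pow_atTop_atTop_of_one_lt ((one_lt_inv₀ hδ0).mpr hδ1)
    have := h1.const_mul_atTop hζ
    simpa [div_eq_mul_inv, inv_pow] using this
  -- the norm of the point tends to infinity
  have hnorm : Tendsto (fun t : ℝ => ‖w + t • d‖) atTop atTop := by
    have hlow : Tendsto (fun t : ℝ => t * ‖d‖ - ‖w‖) atTop atTop := by
      have h2 := tendsto_id.atTop_mul_const (norm_pos_iff.mpr hd)
      have := tendsto_atTop_add_const_right atTop (-‖w‖) h2
      exact this.congr (fun t => by simp [sub_eq_add_neg])
    refine tendsto_atTop_mono (fun t => ?_) hlow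
    have : ‖t • d‖ - ‖w‖ ≤ ‖w + t • d‖ := by
      have h3 : ‖t • d‖ ≤ ‖w + t • d‖ + ‖w‖ := by
        have := norm_sub_le (w + t • d) w
        simpa [add_sub_cancel_left] using this
      linarith
    calc t * ‖d‖ - ‖w‖ ≤ |t| * ‖d‖ - ‖w‖ := by
          gcongr; exact le_abs_self t
      _ = ‖t • d‖ - ‖w‖ := by rw [norm_smul]; rfl
      _ ≤ ‖w + t • d‖ := this
  -- f along the ray tends to infinity
  have hray : Tendsto (fun t : ℝ => f (w + t • d)) atTop atTop := by
    refine hcoer.comp ?_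
    rw [tendsto_comap_iff]
    exact hnorm
  have hfin : Tendsto (fun j : ℕ => f (w + (ζ / δ ^ j) • d)) atTop atTop := hray.comp ht
  obtain ⟨j, hj⟩ := (hfin.eventually_gt_atTop R).exists
  refine ⟨j, lt_of_le_of_lt ?_ hj⟩
  have hpos : 0 < γ * (ζ / δ ^ j) ^ 2 * ‖d‖ ^ 2 := by
    have h4 : 0 < ζ / δ ^ j := div_pos hζ (pow_pos hδ0 j)
    exact mul_pos (mul_pos hγ.1 (pow_pos h4 2)) (pow_pos (norm_pos_iff.mpr hd) 2)
  linarith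
end

section
/- Let f : ℝ^n → ℝ be continuous and coercive (f(x) → +∞ as ‖x‖ → +∞). Let w, d ∈ ℝ^n with d ≠ 0, let R ∈ ℝ with R ≥ f(w), let ζ > 0, γ ∈ (0,1) and δ ∈ (0,1), and suppose the initial condition f(w + ζ d) ≤ R − γ ζ² ‖d‖² holds. Then there exist j ∈ ℕ and α = ζ/δ^j (so α ≥ ζ) such that f(w + α d) ≤ R − γ α² ‖d‖² and f(w + (α/δ) d) > min{ R − γ (α/δ)² ‖d‖², f(w + α d) }. In particular, the Nonmonotone Extrapolation Derivative-Free Linesearch is well defined and its output stepsize α satisfies f(w + α d) ≤ R − γ α² ‖d‖². -/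
open Filter

/-- well-definedness of the NMEDFL, Lemma
`lemma:NMEDFL:welldefined`. If `f` is continuous and coercive, `d ≠ 0`,
`γ, δ ∈ (0,1)`, `R ≥ f(w)` and the initial condition
`f(w + ζ d) ≤ R - γ ζ² ‖d‖²` holds, then there exist `j ∈ ℕ` and
`α = ζ/δ^j ≥ ζ` with `f(w + α d) ≤ R - γ α² ‖d‖²` and
`f(w + (α/δ) d) > min{R - γ (α/δ)² ‖d‖², f(w + α d)}`. -/
theorem stmt_7 {n : ℕ}
    (f : EuclideanSpace ℝ (Fin n) → ℝ)
    (hfc : Continuous f)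
    (hcoer : Tendsto f (Filter.comap norm Filter.atTop) Filter.atTop)
    (w d : EuclideanSpace ℝ (Fin n)) (hd : d ≠ 0)
    (R : ℝ) (hR : f w ≤ R)
    (ζ : ℝ) (hζ : 0 < ζ)
    (γ : ℝ) (hγ : γ ∈ Set.Ioo (0 : ℝ) 1)
    (δ : ℝ) (hδ : δ ∈ Set.Ioo (0 : ℝ) 1)
    (hinit : f (w + ζ • d) ≤ R - γ * ζ ^ 2 * ‖d‖ ^ 2) :
    ∃ j : ℕ, ζ ≤ ζ / δ ^ j ∧
      f (w + (ζ / δ ^ j) • d) ≤ R - γ * (ζ / δ ^ j) ^ 2 * ‖d‖ ^ 2 ∧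
      f (w + (ζ / δ ^ j / δ) • d) >
        min (R - γ * (ζ / δ ^ j / δ) ^ 2 * ‖d‖ ^ 2)
          (f (w + (ζ / δ ^ j) • d)) := by
  obtain ⟨hδ0, hδ1⟩ := hδ
  obtain ⟨hγ0, hγ1⟩ := hγ
  set α : ℕ → ℝ := fun j => ζ / δ ^ j with hα
  have hαpos : ∀ j, 0 < α j := fun j => div_pos hζ (pow_pos hδ0 j)
  have hαsucc : ∀ j, α j / δ = α (j + 1) := by
    intro j
    simp only [hα, pow_succ, div_div]
  -- P j : sufficient decrease at step j
  set P : ℕ → Prop := fun j =>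
    f (w + α j • d) ≤ R - γ * (α j) ^ 2 * ‖d‖ ^ 2 with hP
  set Q : ℕ → Prop := fun j =>
    f (w + α (j + 1) • d) ≤
      min (R - γ * (α (j + 1)) ^ 2 * ‖d‖ ^ 2) (f (w + α j • d)) with hQ
  -- not all P j hold
  have hαtop : Tendsto α atTop atTop := by
    have h1 : (1 : ℝ) < δ⁻¹ := (one_lt_inv₀ hδ0).mpr hδ1
    have := (tendsto_pow_atTop_atTop_of_one_lt h1).const_mul_atTop hζ
    refine this.congr (fun j => ?_)
    rw [hα]
    simp [div_eq_mul_inv, inv_pow]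
  have hnP : ¬ ∀ j, P j := by
    intro h
    have hdpos : 0 < ‖d‖ := norm_pos_iff.mpr hd
    -- norms go to infinity
    have hnorm : Tendsto (fun j => ‖w + α j • d‖) atTop atTop := by
      have hlb : Tendsto (fun j => α j * ‖d‖ - ‖w‖) atTop atTop :=
        (hαtop.atTop_mul_const hdpos).atTop_add tendsto_const_nhds
      refine tendsto_atTop_mono (fun j => ?_) hlb
      have h2 : ‖α j • d‖ ≤ ‖w‖ + ‖w + α j • d‖ := by
        simpa using norm_add_le (-w) (w + α j • d)
      have hn : ‖α j • d‖ = α j * ‖d‖ := by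
        rw [norm_smul, Real.norm_eq_abs, abs_of_pos (hαpos j)]
      linarith
    have hftop : Tendsto (fun j => f (w + α j • d)) atTop atTop := by
      have : Tendsto (fun j => w + α j • d) atTop (comap norm atTop) :=
        tendsto_comap_iff.mpr hnorm
      exact hcoer.comp this
    -- but upper bound tends to -∞
    have hub : Tendsto (fun j => R - γ * (α j) ^ 2 * ‖d‖ ^ 2) atTop atBot := by
      have h2 : Tendsto (fun j => (α j) ^ 2) atTop atTop :=
        (tendsto_pow_atTop (two_ne_zero)).comp hαtop
      have h3 : Tendsto (fun j => γ * (α j) ^ 2 * ‖d‖ ^ 2) atTop atTop :=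
        (h2.const_mul_atTop hγ0).atTop_mul_const (by positivity)
      have h4 := tendsto_atBot_add_const_left atTop R
        (tendsto_neg_atTop_atBot.comp h3)
      exact h4.congr fun j => by simp [Function.comp]; ring
    have h4 : Tendsto (fun j => R - γ * (α j) ^ 2 * ‖d‖ ^ 2) atTop atTop :=
      tendsto_atTop_mono h hftop
    have h5 := (h4.eventually_ge_atTop 1).and (hub.eventually_le_atBot 0)
    obtain ⟨j, hj1, hj2⟩ := h5.exists
    linarith
  -- if all Q j held, all P j would hold
  have hexQ : ∃ j, ¬ Q j := by
    by_contra h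
    push_neg at h
    apply hnP
    intro j
    induction j with
    | zero => simpa [hP, hα] using hinit
    | succ k ih => exact le_trans (h k) (min_le_left _ _)
  classical
  set j := Nat.find hexQ with hj
  have hjQ : ¬ Q j := Nat.find_spec hexQ
  have hjmin : ∀ i < j, Q i := fun i hi => by
    by_contra hc
    exact absurd (Nat.find_le hc) (not_le.mpr hi)
  have key : ∀ m : ℕ, (∀ i < m, Q i) → P m := by
    intro m
    induction m with
    | zero => intro _; simpa [hP, hα] using hinit
    | succ k ih =>
      intro hm
      exact le_trans (hm k (Nat.lt_succ_self k)) (min_le_left _ _)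
  have hPj : P j := key j hjmin
  refine ⟨j, ?_, hPj, ?_⟩
  · have hpow : δ ^ j ≤ 1 := pow_le_one₀ hδ0.le hδ1.le
    calc ζ = ζ / 1 := by ring
    _ ≤ ζ / δ ^ j := by
        apply div_le_div_of_nonneg_left hζ.le (pow_pos hδ0 j) hpow
  · have := not_le.mp hjQ
    have hd2 : ζ / δ ^ j / δ = ζ / δ ^ (j + 1) := by
      rw [div_div, pow_succ]
    rw [hd2]
    exact this
end

section
/- Let f : ℝ^n → ℝ be bounded below, and let θ ∈ (0,1), γ ∈ (0,1), τ > 0. Let {w^k} ⊂ ℝ^n, {ζ^k} ⊂ (0,∞), {d^k} ⊂ ℝ^n and {α^k} ⊂ [0,∞) be sequences such that for every k: (a) ζ^{k+1} = ζ^k or ζ^{k+1} = θ ζ^k, and (b) whenever ζ^{k+1} = ζ^k, at least one of the following holds: either f(w^{k+1}) ≤ f(w^k) − γ ζ^k, or both f(w^{k+1}) ≤ f(w^k) − γ α^k ‖d^k‖² and α^k ‖d^k‖² > τ ζ^k. Then lim_{k→∞} ζ^k = 0. -/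
open Filter

/-- Proposition `th:CMA2_a_0`: the CMA inner stepsize goes to 0.
If `f` is bounded below, the stepsize is either kept or contracted by `θ`, and is
kept only when a watchdog decrease `f(w^{k+1}) ≤ f(w^k) - γ ζ^k` or a linesearch
decrease `f(w^{k+1}) ≤ f(w^k) - γ α^k ‖d^k‖²` with `α^k ‖d^k‖² > τ ζ^k` holds,
then `ζ^k → 0`. -/
theorem stmt_9 {n : ℕ}
    (f : EuclideanSpace ℝ (Fin n) → ℝ)
    (hbdd : BddBelow (Set.range f))
    (θ : ℝ) (hθ : θ ∈ Set.Ioo (0 : ℝ) 1)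
    (γ : ℝ) (hγ : γ ∈ Set.Ioo (0 : ℝ) 1)
    (τ : ℝ) (hτ : 0 < τ)
    (w : ℕ → EuclideanSpace ℝ (Fin n))
    (ζ : ℕ → ℝ) (hζpos : ∀ k, 0 < ζ k)
    (d : ℕ → EuclideanSpace ℝ (Fin n))
    (α : ℕ → ℝ) (hαnonneg : ∀ k, 0 ≤ α k)
    (hupd : ∀ k, ζ (k + 1) = ζ k ∨ ζ (k + 1) = θ * ζ k)
    (hkeep : ∀ k, ζ (k + 1) = ζ k →
      f (w (k + 1)) ≤ f (w k) - γ * ζ k ∨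
      (f (w (k + 1)) ≤ f (w k) - γ * α k * ‖d k‖ ^ 2 ∧
        α k * ‖d k‖ ^ 2 > τ * ζ k)) :
    Tendsto ζ atTop (nhds 0) := by
  obtain ⟨hθ0, hθ1⟩ := hθ
  obtain ⟨hγ0, hγ1⟩ := hγ
  -- ζ is antitone
  have hstep : ∀ k, ζ (k + 1) ≤ ζ k := by
    intro k
    rcases hupd k with h | h
    · exact h.le
    · rw [h]
      nlinarith [hζpos k]
  have hanti : Antitone ζ := antitone_nat_of_succ_le hstep
  have hbb : BddBelow (Set.range ζ) :=
    ⟨0, fun x ⟨k, hk⟩ => hk ▸ (hζpos k).le⟩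
  set L : ℝ := ⨅ k, ζ k with hL
  have htend : Tendsto ζ atTop (nhds L) := tendsto_atTop_ciInf hanti hbb
  have hL0 : 0 ≤ L := le_ciInf fun k => (hζpos k).le
  -- It suffices to show L = 0
  suffices hLz : L = 0 by rwa [hLz] at htend
  by_contra hLne
  have hLpos : 0 < L := lt_of_le_of_ne hL0 (Ne.symm hLne)
  -- Case on whether contraction happens infinitely often
  by_cases hinf : Set.Infinite {k | ζ (k + 1) = θ * ζ k}
  · -- infinitely many contractions: L = θ L, contradiction
    have hfreq : ∃ᶠ k in atTop, ζ (k + 1) = θ * ζ k :=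
      Nat.frequently_atTop_iff_infinite.mpr hinf
    have h2 : Tendsto (fun k => ζ (k + 1)) atTop (nhds L) :=
      htend.comp (tendsto_add_atTop_nat 1)
    have h3 : Tendsto (fun k => θ * ζ k) atTop (nhds (θ * L)) :=
      htend.const_mul θ
    have : L = θ * L := tendsto_nhds_unique_of_frequently_eq h2 h3 hfreq
    nlinarith
  · -- finitely many contractions: ζ eventually constant, f decreases linearly
    have hfin : Set.Finite {k | ζ (k + 1) = θ * ζ k} := Set.not_infinite.mp hinf
    obtain ⟨M, hM⟩ := hfin.bddAbove
    set N := M + 1 with hN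
    have hkeepN : ∀ k, N ≤ k → ζ (k + 1) = ζ k := by
      intro k hk
      rcases hupd k with h | h
      · exact h
      · exfalso
        have : k ≤ M := hM h
        omega
    have hconst : ∀ m, ζ (N + m) = ζ N := by
      intro m
      induction m with
      | zero => rfl
      | succ m ih =>
        have := hkeepN (N + m) (Nat.le_add_right _ _)
        rw [← Nat.add_assoc] at *
        rw [this, ih]
    set δ : ℝ := γ * min (ζ N) (τ * ζ N) with hδ
    have hδpos : 0 < δ := by
      apply mul_pos hγ0
      exact lt_min (hζpos N) (mul_pos hτ (hζpos N))
    have hdec : ∀ m, f (w (N + m + 1)) ≤ f (w (N + m)) - δ := by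
      intro m
      have hzk : ζ (N + m) = ζ N := hconst m
      have hk : ζ (N + m + 1) = ζ (N + m) := hkeepN _ (Nat.le_add_right _ _)
      rcases hkeep (N + m) hk with h | ⟨h, hls⟩
      · have : δ ≤ γ * ζ (N + m) := by
          rw [hzk, hδ]
          exact mul_le_mul_of_nonneg_left (min_le_left _ _) hγ0.le
        linarith
      · have h1 : δ ≤ γ * (α (N + m) * ‖d (N + m)‖ ^ 2) := by
          have : τ * ζ N < α (N + m) * ‖d (N + m)‖ ^ 2 := by rw [← hzk]; exact hls
          have h2 : δ ≤ γ * (τ * ζ N) :=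
            mul_le_mul_of_nonneg_left (min_le_right _ _) hγ0.le
          nlinarith
        rw [← mul_assoc] at h1
        linarith
    have hsum : ∀ m, f (w (N + m)) ≤ f (w N) - m * δ := by
      intro m
      induction m with
      | zero => simp
      | succ m ih =>
        have := hdec m
        push_cast
        rw [← Nat.add_assoc] at *
        nlinarith
    obtain ⟨B, hB⟩ := hbdd
    have hB' : ∀ m : ℕ, B ≤ f (w N) - m * δ := fun m =>
      le_trans (hB ⟨w (N + m), rfl⟩) (hsum m)
    obtain ⟨m, hm⟩ := exists_nat_gt ((f (w N) - B) / δ)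
    have := hB' m
    have : (m : ℝ) * δ ≤ f (w N) - B := by linarith
    have : (m : ℝ) ≤ (f (w N) - B) / δ := (le_div_iff₀ hδpos).mpr this
    linarith
end

section
/- Let f : ℝ^n → ℝ be bounded below and Lipschitz continuous with some constant L' > 0, let σ : [0,∞) → [0,∞) be a forcing function, and let M ∈ ℕ. Let {w^k} ⊂ ℝ^n and {R^k} ⊂ ℝ be sequences such that for every k: f(w^k) ≤ R^k ≤ max_{0 ≤ j ≤ min(k,M)} f(w^{k−j}) and f(w^{k+1}) ≤ R^k − σ(‖w^{k+1} − w^k‖). Then the sequence k ↦ max_{0 ≤ j ≤ min(k,M)} f(w^{k−j}) is nonincreasing, and consequently f(w^k) ≤ f(w^0) for all k, i.e. w^k ∈ L(w^0) = { w : f(w) ≤ f(w^0) } for all k. -/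
open Filter Finset

/-- `refMax g M k = max_{0 ≤ j ≤ min(k,M)} g (k - j)`, the nonmonotone reference
maximum over the last `min(k,M)+1` values. -/
noncomputable def refMax (g : ℕ → ℝ) (M k : ℕ) : ℝ :=
  (Finset.range (min k M + 1)).sup' Finset.nonempty_range_add_one fun j => g (k - j)

/-
The reference maximum over a sliding window of length `M + 1` can only drop: the window at
`k + 1` consists of `g (k + 1)`, which the descent condition bounds by `R k ≤ refMax g M k`
(as `σ ≥ 0`), and of values already in the window at `k`. Antitonicity then bounds every
`f (w k) ≤ refMax g M k` by `refMax g M 0 = f (w 0)`.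
-/

section RefMax

variable {g : ℕ → ℝ} {M : ℕ}

theorem le_refMax_of_le_min {k j : ℕ} (hj : j ≤ min k M) : g (k - j) ≤ refMax g M k :=
  Finset.le_sup' (fun j => g (k - j)) (Finset.mem_range.mpr (Nat.lt_succ_of_le hj))

theorem self_le_refMax (k : ℕ) : g k ≤ refMax g M k := by
  simpa using le_refMax_of_le_min (g := g) (M := M) (k := k) (Nat.zero_le _)

@[simp]
theorem refMax_zero : refMax g M 0 = g 0 := by
  simp [refMax]

theorem refMax_succ_le {k : ℕ} (hstep : g (k + 1) ≤ refMax g M k) :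
    refMax g M (k + 1) ≤ refMax g M k := by
  refine Finset.sup'_le _ _ fun j hj => ?_
  rcases j with _ | i
  · exact hstep
  · have hi : i ≤ min k M := by
      have := Finset.mem_range.mp hj
      omega
    simpa using le_refMax_of_le_min hi

theorem antitone_refMax (hstep : ∀ k, g (k + 1) ≤ refMax g M k) : Antitone (refMax g M) :=
  antitone_nat_of_succ_le fun k => refMax_succ_le (hstep k)

theorem le_apply_zero_of_le_refMax (hstep : ∀ k, g (k + 1) ≤ refMax g M k) (k : ℕ) : g k ≤ g 0 :=
  calc g k ≤ refMax g M k := self_le_refMax k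
    _ ≤ refMax g M 0 := antitone_refMax hstep (Nat.zero_le k)
    _ = g 0 := refMax_zero

end RefMax

theorem stmt_11_general {n : ℕ}
    (f : EuclideanSpace ℝ (Fin n) → ℝ)
    (σ : ℝ → ℝ) (hσnonneg : ∀ t, 0 ≤ t → 0 ≤ σ t)
    (M : ℕ)
    (w : ℕ → EuclideanSpace ℝ (Fin n)) (R : ℕ → ℝ)
    (hRhigh : ∀ k, R k ≤ refMax (fun k => f (w k)) M k)
    (hdecr : ∀ k, f (w (k + 1)) ≤ R k - σ ‖w (k + 1) - w k‖) :
    Antitone (fun k => refMax (fun k => f (w k)) M k) ∧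
      ∀ k, f (w k) ≤ f (w 0) := by
  have hstep : ∀ k, f (w (k + 1)) ≤ refMax (fun k => f (w k)) M k := fun k => by
    have := hσnonneg ‖w (k + 1) - w k‖ (norm_nonneg _)
    linarith [hdecr k, hRhigh k]
  exact ⟨antitone_refMax hstep, le_apply_zero_of_le_refMax hstep⟩

/-- Lemma 1 from Grippo et al., parts (i).
If `f` is bounded below and Lipschitz, `σ` is a forcing function and the
sequence satisfies `f(w^k) ≤ R^k ≤ max_{0≤j≤min(k,M)} f(w^{k-j})` and
`f(w^{k+1}) ≤ R^k - σ(‖w^{k+1} - w^k‖)`, then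
`k ↦ max_{0≤j≤min(k,M)} f(w^{k-j})` is nonincreasing and `f(w^k) ≤ f(w^0)`
for all `k`. -/
theorem stmt_11 {n : ℕ}
    (f : EuclideanSpace ℝ (Fin n) → ℝ)
    (hbdd : BddBelow (Set.range f))
    (L' : ℝ) (hL' : 0 < L')
    (hlip : ∀ u v : EuclideanSpace ℝ (Fin n), |f u - f v| ≤ L' * ‖u - v‖)
    (σ : ℝ → ℝ) (hσnonneg : ∀ t, 0 ≤ t → 0 ≤ σ t)
    (hσforcing : ∀ t : ℕ → ℝ, (∀ k, 0 ≤ t k) →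
      Tendsto (fun k => σ (t k)) atTop (nhds 0) → Tendsto t atTop (nhds 0))
    (M : ℕ)
    (w : ℕ → EuclideanSpace ℝ (Fin n)) (R : ℕ → ℝ)
    (hRlow : ∀ k, f (w k) ≤ R k)
    (hRhigh : ∀ k, R k ≤ refMax (fun k => f (w k)) M k)
    (hdecr : ∀ k, f (w (k + 1)) ≤ R k - σ ‖w (k + 1) - w k‖) :
    Antitone (fun k => refMax (fun k => f (w k)) M k) ∧
      ∀ k, f (w k) ≤ f (w 0) :=
  stmt_11_general f σ hσnonneg M w R hRhigh hdecr
end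

section
/- Let f : ℝ^n → ℝ, and let θ ∈ (0,1), γ ∈ (0,1), τ > 0. Let {w^k} ⊂ ℝ^n, {R^k} ⊂ ℝ, {ζ^k} ⊂ (0,∞), {d^k} ⊂ ℝ^n and {α^k} ⊂ [0,∞) be sequences such that: (a) for every k, ζ^{k+1} = ζ^k or ζ^{k+1} = θ ζ^k; (b) R^k ≥ f(w^k) for all k and lim_{k→∞} (R^k − f(w^{k+1})) = 0; (c) whenever ζ^{k+1} = ζ^k, at least one of the following holds: either f(w^{k+1}) ≤ R^k − γ ζ^k, or both f(w^{k+1}) ≤ R^k − γ (α^k)² ‖d^k‖² and (α^k)² ‖d^k‖² > τ ζ^k. Then lim_{k→∞} ζ^k = 0. -/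
open Filter

/-- Proposition `th:NMCMA_a_0`: the NMCMA inner stepsize goes
to 0. If `R^k ≥ f(w^k)` with `R^k - f(w^{k+1}) → 0`, the stepsize is either
kept or contracted by `θ`, and is kept only when either the nonmonotone
watchdog decrease `f(w^{k+1}) ≤ R^k - γ ζ^k` or a nonmonotone linesearch
decrease `f(w^{k+1}) ≤ R^k - γ (α^k)² ‖d^k‖²` with `(α^k)² ‖d^k‖² > τ ζ^k`
holds, then `ζ^k → 0`. -/
theorem stmt_16 {n : ℕ}
    (f : EuclideanSpace ℝ (Fin n) → ℝ)
    (θ : ℝ) (hθ : θ ∈ Set.Ioo (0 : ℝ) 1)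
    (γ : ℝ) (hγ : γ ∈ Set.Ioo (0 : ℝ) 1)
    (τ : ℝ) (hτ : 0 < τ)
    (w : ℕ → EuclideanSpace ℝ (Fin n)) (R : ℕ → ℝ)
    (ζ : ℕ → ℝ) (hζpos : ∀ k, 0 < ζ k)
    (d : ℕ → EuclideanSpace ℝ (Fin n))
    (α : ℕ → ℝ) (hαnonneg : ∀ k, 0 ≤ α k)
    (hupd : ∀ k, ζ (k + 1) = ζ k ∨ ζ (k + 1) = θ * ζ k)
    (hRf : ∀ k, f (w k) ≤ R k)
    (hRconv : Tendsto (fun k => R k - f (w (k + 1))) atTop (nhds 0))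
    (hkeep : ∀ k, ζ (k + 1) = ζ k →
      f (w (k + 1)) ≤ R k - γ * ζ k ∨
      (f (w (k + 1)) ≤ R k - γ * α k ^ 2 * ‖d k‖ ^ 2 ∧
        α k ^ 2 * ‖d k‖ ^ 2 > τ * ζ k)) :
    Tendsto ζ atTop (nhds 0) := by
  obtain ⟨hθ0, hθ1⟩ := hθ
  obtain ⟨hγ0, hγ1⟩ := hγ
  have hζ0 : ∀ k, (0 : ℝ) ≤ ζ k := fun k => (hζpos k).le
  have hbdd : BddBelow (Set.range ζ) := ⟨0, by rintro x ⟨k, rfl⟩; exact hζ0 k⟩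
  have hmono : Antitone ζ := antitone_nat_of_succ_le (fun k => by
    rcases hupd k with h | h
    · exact h.le
    · rw [h]; nlinarith [hζpos k])
  set c := ⨅ k, ζ k with hc
  have htend : Tendsto ζ atTop (nhds c) := tendsto_atTop_ciInf hmono hbdd
  have hc0 : (0 : ℝ) ≤ c := le_ciInf hζ0
  rcases eq_or_lt_of_le hc0 with h | hcpos
  · rwa [← h] at htend
  exfalso
  have hcle : ∀ k, c ≤ ζ k := fun k => ciInf_le hbdd k
  have hlt : c < c / θ := by
    rw [lt_div_iff₀ hθ0]; nlinarith
  have hev : ∀ᶠ k in atTop, ζ k < c / θ := htend.eventually_lt_const hlt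
  set ε := γ * min 1 τ * c with hε
  have hεpos : 0 < ε := by
    have : 0 < min 1 τ := lt_min one_pos hτ
    positivity
  have hev2 : ∀ᶠ k in atTop, R k - f (w (k + 1)) < ε :=
    hRconv.eventually_lt_const hεpos
  obtain ⟨k, h1, h2⟩ := (hev.and hev2).exists
  have hkeq : ζ (k + 1) = ζ k := by
    rcases hupd k with h | h
    · exact h
    · exfalso
      have : ζ (k + 1) < c := by
        rw [h]
        calc θ * ζ k < θ * (c / θ) := by
              exact mul_lt_mul_of_pos_left h1 hθ0
          _ = c := by field_simp
      exact absurd (hcle (k + 1)) (not_le.mpr this)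
  have hlb : ε ≤ R k - f (w (k + 1)) := by
    rcases hkeep k hkeq with h | ⟨ha, hb⟩
    · have : γ * min 1 τ * c ≤ γ * ζ k := by
        have h1' : min 1 τ ≤ 1 := min_le_left _ _
        have h2' : c ≤ ζ k := hcle k
        have hm0 : (0:ℝ) ≤ min 1 τ := le_min zero_le_one hτ.le
        calc γ * min 1 τ * c ≤ γ * min 1 τ * ζ k :=
              mul_le_mul_of_nonneg_left h2' (mul_nonneg hγ0.le hm0)
          _ ≤ γ * 1 * ζ k :=
              mul_le_mul_of_nonneg_right
                (mul_le_mul_of_nonneg_left h1' hγ0.le) (hζ0 k)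
          _ = γ * ζ k := by ring
      linarith
    · have h3 : γ * min 1 τ * c ≤ γ * τ * ζ k := by
        have h1' : min 1 τ ≤ τ := min_le_right _ _
        have h2' : c ≤ ζ k := hcle k
        have hm0 : (0:ℝ) ≤ min 1 τ := le_min zero_le_one hτ.le
        calc γ * min 1 τ * c ≤ γ * min 1 τ * ζ k :=
              mul_le_mul_of_nonneg_left h2' (mul_nonneg hγ0.le hm0)
          _ ≤ γ * τ * ζ k :=
              mul_le_mul_of_nonneg_right
                (mul_le_mul_of_nonneg_left h1' hγ0.le) (hζ0 k)
      have h4 : γ * τ * ζ k ≤ γ * (α k ^ 2 * ‖d k‖ ^ 2) := by nlinarith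
      linarith
  linarith
end

section
/- Let f_1, …, f_P : ℝ^n → ℝ be continuously differentiable and suppose there is L > 0 such that each gradient ∇f_p is L-Lipschitz continuous; set f = ∑_{p=1}^P f_p. Let γ ∈ (0,1), δ ∈ (0,1) and τ > 0. Let {w^k} ⊂ ℝ^n be a bounded sequence and {ζ^k} ⊂ (0,∞) with ζ^k → 0. For each k let (h_1^k, …, h_P^k) be a permutation of {1, …, P}, define w̃_0^k = w^k, w̃_i^k = w̃_{i−1}^k − ζ^k ∇f_{h_i^k}(w̃_{i−1}^k) for i = 1, …, P, and d^k = −∑_{i=1}^P ∇f_{h_i^k}(w̃_{i−1}^k). Suppose there is an infinite set K ⊆ ℕ such that for every k ∈ K at least one of the following holds: (i) ‖d^k‖ ≤ τ ζ^k; (ii) f(w^k + ζ^k d^k) > f(w^k) − γ (ζ^k)² ‖d^k‖²; (iii) there is α^k > 0 with (α^k)² ‖d^k‖² ≤ τ ζ^k and f(w^k + (α^k/δ) d^k) > f(w^k) − γ (α^k/δ)² ‖d^k‖². Then {w^k} admits limit points and at least one limit point w̄ of {w^k} satisfies ∇f(w̄) = 0. -/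
/-!
Since `ζ^k → 0`, one epoch of the incremental method moves `w^k` only by `O(ζ^k)`, so by the
Lipschitz continuity of the `∇f_p` the direction satisfies `d^k = -∇f(w^k) + O(ζ^k)`.
By the descent lemma `f(w + v) ≤ f(w) + ⟪∇f(w), v⟫ + Λ‖v‖²`, a sufficient-decrease test along
`d` with step `t` can only fail if `(1 - (Λ + γ) t) ‖d‖ ≤ ‖d + ∇f(w)‖`. Hence on `K` each of the
conditions (i)–(iii) forces `d^k → 0` (in (iii) because `t ‖d^k‖ ≤ √(τ ζ^k) / δ`), so
`∇f(w^k) → 0` along `K`, and a limit point of the bounded subsequence indexed by `K` is stationary.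
-/

open Filter Finset Topology NNReal

theorem LipschitzWith.finset_sum {α ι E : Type*} [PseudoEMetricSpace α] [SeminormedAddCommGroup E]
    (s : Finset ι) {K : ι → ℝ≥0} {g : ι → α → E} (hg : ∀ i ∈ s, LipschitzWith (K i) (g i)) :
    LipschitzWith (∑ i ∈ s, K i) fun x => ∑ i ∈ s, g i x := by
  classical
  induction s using Finset.induction_on with
  | empty => simpa using LipschitzWith.const (0 : E)
  | insert a s ha ih =>
    simp only [Finset.sum_insert ha]
    exact (hg a (mem_insert_self a s)).add (ih fun i hi => hg i (mem_insert_of_mem hi))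

theorem HasGradientAt.fun_sum {E ι : Type*} [NormedAddCommGroup E] [InnerProductSpace ℝ E]
    [CompleteSpace E] {s : Finset ι} {f : ι → E → ℝ} {f' : ι → E} {x : E}
    (h : ∀ i ∈ s, HasGradientAt (f i) (f' i) x) :
    HasGradientAt (fun y => ∑ i ∈ s, f i y) (∑ i ∈ s, f' i) x := by
  rw [hasGradientAt_iff_hasFDerivAt, map_sum]
  exact HasFDerivAt.fun_sum fun i hi => (h i hi).hasFDerivAt

theorem exists_subseq_tendsto_and_eq_of_tendsto_inf_principal {X Y : Type*}
    [PseudoMetricSpace X] [ProperSpace X] [TopologicalSpace Y] [T2Space Y] {G : X → Y}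
    (hG : Continuous G) {w : ℕ → X} (hw : Bornology.IsBounded (Set.range w)) {K : Set ℕ}
    (hK : K.Infinite) {y : Y} (hGw : Tendsto (G ∘ w) (atTop ⊓ 𝓟 K) (𝓝 y)) :
    ∃ x, (∃ φ : ℕ → ℕ, StrictMono φ ∧ Tendsto (w ∘ φ) atTop (𝓝 x)) ∧ G x = y := by
  set ψ := Nat.nth (· ∈ K)
  have hψ : StrictMono ψ := Nat.nth_strictMono hK
  have hψK : Tendsto ψ atTop (atTop ⊓ 𝓟 K) :=
    tendsto_inf.2 ⟨hψ.tendsto_atTop, tendsto_principal.2 (Eventually.of_forall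
      (Nat.nth_mem_of_infinite hK))⟩
  obtain ⟨x, -, φ, hφ, hx⟩ := tendsto_subseq_of_bounded hw (fun j => Set.mem_range_self (ψ j))
  refine ⟨x, ⟨ψ ∘ φ, hψ.comp hφ, hx⟩, tendsto_nhds_unique ((hG.tendsto x).comp hx) ?_⟩
  exact hGw.comp (hψK.comp hφ.tendsto_atTop)

section Descent
variable {E : Type*} [NormedAddCommGroup E] [InnerProductSpace ℝ E] [CompleteSpace E]
  {F : E → ℝ} {G : E → E} {K : ℝ≥0}

theorem le_add_inner_add_of_lipschitzWith_gradient (hF : ∀ x, HasGradientAt F (G x) x)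
    (hG : LipschitzWith K G) (x v : E) :
    F (x + v) ≤ F x + inner ℝ (G x) v + K * ‖v‖ ^ 2 := by
  set φ : ℝ → ℝ := fun t => F (x + t • v) - t * inner ℝ (G x) v
  have hφ : ∀ t, HasDerivAt φ (inner ℝ (G (x + t • v) - G x) v) t := by
    intro t
    have hline : HasDerivAt (fun t : ℝ => x + t • v) v t := by
      simpa using ((hasDerivAt_id t).smul_const v).const_add x
    have := ((hF (x + t • v)).hasFDerivAt.comp_hasDerivAt t hline).fun_sub
      ((hasDerivAt_id t).mul_const (inner ℝ (G x) v))
    simpa [Function.comp_def, InnerProductSpace.toDual_apply_apply, inner_sub_left] using this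
  have hbound : ∀ t ∈ Set.Ico (0 : ℝ) 1, ‖inner ℝ (G (x + t • v) - G x) v‖ ≤ K * ‖v‖ ^ 2 := by
    rintro t ⟨ht0, ht1⟩
    calc ‖inner ℝ (G (x + t • v) - G x) v‖ ≤ ‖G (x + t • v) - G x‖ * ‖v‖ := norm_inner_le_norm _ _
      _ ≤ K * ‖t • v‖ * ‖v‖ := by
          gcongr
          simpa using hG.norm_sub_le (x + t • v) x
      _ ≤ K * ‖v‖ * ‖v‖ := by
          rw [norm_smul, Real.norm_of_nonneg ht0]
          gcongr
          exact mul_le_of_le_one_left (norm_nonneg v) ht1.le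
      _ = K * ‖v‖ ^ 2 := by ring
  have hmvt : φ 1 - φ 0 ≤ K * ‖v‖ ^ 2 := (Real.le_norm_self _).trans
    (norm_image_sub_le_of_norm_deriv_le_segment_01' (fun t _ => (hφ t).hasDerivWithinAt) hbound)
  simp only [φ, one_smul, zero_smul, add_zero, one_mul, zero_mul, sub_zero] at hmvt
  linarith

theorem one_sub_mul_norm_le_of_sufficient_decrease_fails (hF : ∀ x, HasGradientAt F (G x) x)
    (hG : LipschitzWith K G) {γ t : ℝ} {w d : E} (ht : 0 < t)
    (hfail : F (w + t • d) > F w - γ * t ^ 2 * ‖d‖ ^ 2) :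
    (1 - (K + γ) * t) * ‖d‖ ≤ ‖d + G w‖ := by
  have hdesc := le_add_inner_add_of_lipschitzWith_gradient hF hG w (t • d)
  rw [inner_smul_right, norm_smul, Real.norm_of_nonneg ht.le] at hdesc
  have hinner : inner ℝ (G w) d ≤ ‖d + G w‖ * ‖d‖ - ‖d‖ ^ 2 := by
    have hsplit : inner ℝ (G w) d = inner ℝ (d + G w) d - ‖d‖ ^ 2 := by
      rw [inner_add_left, real_inner_self_eq_norm_sq]; ring
    linarith [real_inner_le_norm (d + G w) d]
  have hquad : (1 - (K + γ) * t) * ‖d‖ * ‖d‖ ≤ ‖d + G w‖ * ‖d‖ := by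
    refine le_of_mul_le_mul_left ?_ ht
    nlinarith [mul_le_mul_of_nonneg_left hinner ht.le]
  rcases (norm_nonneg d).eq_or_lt with hd0 | hdpos
  · rw [← hd0, mul_zero]
    exact norm_nonneg _
  · exact le_of_mul_le_mul_right hquad hdpos

theorem norm_le_of_stepsize_reduction (hF : ∀ x, HasGradientAt F (G x) x)
    (hG : LipschitzWith K G) {γ δ τ ζ : ℝ} {w d : E} (hγ : 0 ≤ γ) (hδ : 0 < δ) (hζ : 0 < ζ)
    (hζsmall : (K + γ) * ζ ≤ 1 / 2)
    (h : ‖d‖ ≤ τ * ζ ∨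
      F (w + ζ • d) > F w - γ * ζ ^ 2 * ‖d‖ ^ 2 ∨
      (∃ α : ℝ, 0 < α ∧ α ^ 2 * ‖d‖ ^ 2 ≤ τ * ζ ∧
        F (w + (α / δ) • d) > F w - γ * (α / δ) ^ 2 * ‖d‖ ^ 2)) :
    ‖d‖ ≤ max (τ * ζ) (max (2 * ‖d + G w‖) (‖d + G w‖ + (K + γ) * √(τ * ζ) / δ)) := by
  rcases h with hsmall | hfail | ⟨α, hα, hαd, hfail⟩
  · exact le_max_of_le_left hsmall
  · have hd := one_sub_mul_norm_le_of_sufficient_decrease_fails hF hG hζ hfail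
    refine le_max_of_le_right (le_max_of_le_left ?_)
    nlinarith [norm_nonneg d]
  · have hd := one_sub_mul_norm_le_of_sufficient_decrease_fails hF hG (div_pos hα hδ) hfail
    have hαd' : α * ‖d‖ ≤ √(τ * ζ) :=
      (le_abs_self _).trans (Real.abs_le_sqrt (by rwa [mul_pow]))
    have hstep : α / δ * ‖d‖ ≤ √(τ * ζ) / δ := by
      rw [div_mul_eq_mul_div]
      exact div_le_div_of_nonneg_right hαd' hδ.le
    refine le_max_of_le_right (le_max_of_le_right ?_)
    have hKγ : 0 ≤ (K : ℝ) + γ := by positivity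
    calc ‖d‖ ≤ ‖d + G w‖ + (K + γ) * (α / δ * ‖d‖) := by linarith
      _ ≤ ‖d + G w‖ + (K + γ) * (√(τ * ζ) / δ) := by gcongr
      _ = ‖d + G w‖ + (K + γ) * √(τ * ζ) / δ := by ring

theorem tendsto_gradient_of_stepsize_reduction (hF : ∀ x, HasGradientAt F (G x) x)
    (hG : LipschitzWith K G) {γ δ τ : ℝ} {w d : ℕ → E} {ζ : ℕ → ℝ} {S : Set ℕ} (hγ : 0 ≤ γ)
    (hδ : 0 < δ) (hζ : ∀ k, 0 < ζ k) (hζ0 : Tendsto ζ atTop (𝓝 0))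
    (he : Tendsto (fun k => ‖d k + G (w k)‖) atTop (𝓝 0))
    (hS : ∀ k ∈ S,
      ‖d k‖ ≤ τ * ζ k ∨
      F (w k + ζ k • d k) > F (w k) - γ * ζ k ^ 2 * ‖d k‖ ^ 2 ∨
      (∃ α : ℝ, 0 < α ∧ α ^ 2 * ‖d k‖ ^ 2 ≤ τ * ζ k ∧
        F (w k + (α / δ) • d k) > F (w k) - γ * (α / δ) ^ 2 * ‖d k‖ ^ 2)) :
    Tendsto (G ∘ w) (atTop ⊓ 𝓟 S) (𝓝 0) := by
  set e := fun k => ‖d k + G (w k)‖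
  set β := fun q : ℝ × ℝ => max (τ * q.1) (max (2 * q.2) (q.2 + (K + γ) * √(τ * q.1) / δ)) + q.2
  have hβ : Tendsto (fun k => β (ζ k, e k)) atTop (𝓝 0) := by
    have : Continuous β := by fun_prop
    simpa [β, Function.comp_def] using (this.tendsto (0, 0)).comp (hζ0.prodMk_nhds he)
  have hsmall : ∀ᶠ k in atTop, (K + γ) * ζ k ≤ 1 / 2 :=
    (hζ0.const_mul _).eventually (eventually_le_nhds (by simp))
  refine squeeze_zero_norm' ?_ (hβ.mono_left inf_le_left)
  filter_upwards [hsmall.filter_mono inf_le_left, mem_inf_of_right (mem_principal_self S)]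
    with k hk hkS
  calc ‖G (w k)‖ ≤ ‖d k‖ + e k := by
        simpa [e, add_comm ‖d k‖] using norm_sub_le (d k + G (w k)) (d k)
    _ ≤ β (ζ k, e k) := by
        dsimp only [β]
        gcongr
        exact norm_le_of_stepsize_reduction hF hG hγ hδ (hζ k) hk (hS k hkS)
end Descent

section Incremental
variable {E : Type*} [SeminormedAddCommGroup E] [NormedSpace ℝ E] {K : ℝ≥0} {B : ℝ} {N : ℕ}

theorem norm_incremental_sub_le {g : ℕ → E → E} {ζ : ℝ} {x : ℕ → E}
    (hg : ∀ i, LipschitzWith K (g i)) (hζ : 0 ≤ ζ) (hB : ∀ i < N, ‖g i (x 0)‖ ≤ B)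
    (hx : ∀ i < N, x (i + 1) = x i - ζ • g i (x i)) :
    ∀ i ≤ N, ‖x i - x 0‖ ≤ ζ * B * i * (1 + ζ * K) ^ i := by
  intro i
  induction i with
  | zero => simp
  | succ i ih =>
    intro hiN
    have hi : i < N := hiN
    have hB0 : 0 ≤ B := (norm_nonneg _).trans (hB i hi)
    have hstep : ‖g i (x i)‖ ≤ B + K * ‖x i - x 0‖ := by
      calc ‖g i (x i)‖ ≤ ‖g i (x 0)‖ + ‖g i (x i) - g i (x 0)‖ := norm_le_norm_add_norm_sub' _ _
        _ ≤ B + K * ‖x i - x 0‖ := add_le_add (hB i hi) ((hg i).norm_sub_le _ _)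
    have hpow : 1 ≤ (1 + ζ * K) ^ (i + 1) := one_le_pow₀ (le_add_of_nonneg_right (by positivity))
    calc ‖x (i + 1) - x 0‖ = ‖(x i - x 0) - ζ • g i (x i)‖ := by rw [hx i hi, sub_right_comm]
      _ ≤ ‖x i - x 0‖ + ζ * (B + K * ‖x i - x 0‖) := by
          refine (norm_sub_le _ _).trans ?_
          rw [norm_smul, Real.norm_of_nonneg hζ]
          gcongr
      _ = (1 + ζ * K) * ‖x i - x 0‖ + ζ * B := by ring
      _ ≤ (1 + ζ * K) * (ζ * B * i * (1 + ζ * K) ^ i) + ζ * B := by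
          gcongr
          exact ih hi.le
      _ ≤ ζ * B * (i + 1 : ℕ) * (1 + ζ * K) ^ (i + 1) := by
          push_cast
          linear_combination mul_le_mul_of_nonneg_left hpow (mul_nonneg hζ hB0)

theorem norm_sum_incremental_sub_le {g : ℕ → E → E} {ζ : ℝ} {x : ℕ → E}
    (hg : ∀ i, LipschitzWith K (g i)) (hζ : 0 ≤ ζ) (hB : ∀ i < N, ‖g i (x 0)‖ ≤ B)
    (hx : ∀ i < N, x (i + 1) = x i - ζ • g i (x i)) :
    ‖∑ i ∈ range N, g i (x i) - ∑ i ∈ range N, g i (x 0)‖ ≤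
      N * (K * (ζ * B * N * (1 + ζ * K) ^ N)) := by
  have hterm : ∀ i ∈ range N, ‖g i (x i) - g i (x 0)‖ ≤ K * (ζ * B * N * (1 + ζ * K) ^ N) := by
    intro i hi
    have hiN : i < N := mem_range.1 hi
    have hB0 : 0 ≤ B := (norm_nonneg _).trans (hB i hiN)
    calc ‖g i (x i) - g i (x 0)‖ ≤ K * ‖x i - x 0‖ := (hg i).norm_sub_le _ _
      _ ≤ K * (ζ * B * i * (1 + ζ * K) ^ i) := by
          gcongr
          exact norm_incremental_sub_le hg hζ hB hx i hiN.le
      _ ≤ K * (ζ * B * N * (1 + ζ * K) ^ N) := by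
          gcongr
          exact le_add_of_nonneg_right (by positivity)
  calc ‖∑ i ∈ range N, g i (x i) - ∑ i ∈ range N, g i (x 0)‖
      ≤ ∑ i ∈ range N, ‖g i (x i) - g i (x 0)‖ := by
        rw [← sum_sub_distrib]
        exact norm_sum_le _ _
    _ ≤ ∑ _i ∈ range N, K * (ζ * B * N * (1 + ζ * K) ^ N) := sum_le_sum hterm
    _ = N * (K * (ζ * B * N * (1 + ζ * K) ^ N)) := by simp

theorem tendsto_norm_sum_incremental_sub {g : ℕ → ℕ → E → E} {ζ : ℕ → ℝ} {x : ℕ → ℕ → E}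
    (hg : ∀ k i, LipschitzWith K (g k i)) (hζ : ∀ k, 0 ≤ ζ k) (hζ0 : Tendsto ζ atTop (𝓝 0))
    (hB : ∀ k, ∀ i < N, ‖g k i (x k 0)‖ ≤ B)
    (hx : ∀ k, ∀ i < N, x k (i + 1) = x k i - ζ k • g k i (x k i)) :
    Tendsto (fun k => ‖∑ i ∈ range N, g k i (x k i) - ∑ i ∈ range N, g k i (x k 0)‖)
      atTop (𝓝 0) := by
  have hbound : Continuous fun z : ℝ => N * (K * (z * B * N * (1 + z * K) ^ N)) := by
    fun_prop
  refine squeeze_zero (fun _ => norm_nonneg _)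
    (fun k => norm_sum_incremental_sub_le (hg k) (hζ k) (hB k) (hx k)) ?_
  simpa [Function.comp_def] using (hbound.tendsto 0).comp hζ0

theorem tendsto_norm_sum_incremental_sub_sum {P : ℕ} {g : Fin P → E → E}
    (hg : ∀ p, LipschitzWith K (g p)) {w : ℕ → E} (hw : ∃ C, ∀ k, ‖w k‖ ≤ C) {ζ : ℕ → ℝ}
    (hζ : ∀ k, 0 ≤ ζ k) (hζ0 : Tendsto ζ atTop (𝓝 0)) {σ : ℕ → ℕ → Fin P}
    (hσ : ∀ k, Function.Bijective fun i : Fin P => σ k i) {x : ℕ → ℕ → E}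
    (hx0 : ∀ k, x k 0 = w k) (hx : ∀ k, ∀ i < P, x k (i + 1) = x k i - ζ k • g (σ k i) (x k i)) :
    Tendsto (fun k => ‖∑ i ∈ range P, g (σ k i) (x k i) - ∑ p, g p (w k)‖) atTop (𝓝 0) := by
  obtain ⟨C, hC⟩ := hw
  have hB : ∀ k, ∀ i < P, ‖g (σ k i) (x k 0)‖ ≤ ∑ p, ‖g p 0‖ + K * C := by
    intro k i _
    rw [hx0]
    calc ‖g (σ k i) (w k)‖ ≤ ‖g (σ k i) 0‖ + ‖g (σ k i) (w k) - g (σ k i) 0‖ :=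
          norm_le_norm_add_norm_sub' _ _
      _ ≤ ∑ p, ‖g p 0‖ + K * C := by
          gcongr
          · exact single_le_sum (f := fun p => ‖g p 0‖) (fun p _ => norm_nonneg _) (mem_univ _)
          · simpa using ((hg _).norm_sub_le (w k) 0).trans (by gcongr; simpa using hC k)
  have hperm : ∀ k, ∑ i ∈ range P, g (σ k i) (x k 0) = ∑ p, g p (w k) := by
    intro k
    rw [hx0, ← Fin.sum_univ_eq_sum_range (fun i => g (σ k i) (w k))]
    exact Fintype.sum_bijective _ (hσ k) _ _ fun _ => rfl
  simpa only [hperm] using tendsto_norm_sum_incremental_sub (fun k i => hg _) hζ hζ0 hB hx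
end Incremental

theorem stmt_17_general {n P : ℕ}
    (f : Fin P → EuclideanSpace ℝ (Fin n) → ℝ)
    (hf : ∀ p, ContDiff ℝ 1 (f p))
    (L : ℝ) (hL : 0 < L)
    (hlip : ∀ p (u v : EuclideanSpace ℝ (Fin n)),
      ‖gradient (f p) u - gradient (f p) v‖ ≤ L * ‖u - v‖)
    (γ : ℝ) (hγ : γ ∈ Set.Ioo (0 : ℝ) 1)
    (δ : ℝ) (hδ : δ ∈ Set.Ioo (0 : ℝ) 1)
    (τ : ℝ)
    (w : ℕ → EuclideanSpace ℝ (Fin n)) (hwbdd : ∃ C, ∀ k, ‖w k‖ ≤ C)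
    (ζ : ℕ → ℝ) (hζpos : ∀ k, 0 < ζ k)
    (hζto0 : Tendsto ζ atTop (nhds 0))
    (h : ℕ → ℕ → Fin P)
    (hperm : ∀ k, Function.Bijective (fun i : Fin P => h k i.val))
    (wt : ℕ → ℕ → EuclideanSpace ℝ (Fin n))
    (hinit : ∀ k, wt k 0 = w k)
    (hiter : ∀ k, ∀ i, i < P →
      wt k (i + 1) = wt k i - ζ k • gradient (f (h k i)) (wt k i))
    (d : ℕ → EuclideanSpace ℝ (Fin n))
    (hd : ∀ k, d k = -∑ i ∈ Finset.range P, gradient (f (h k i)) (wt k i))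
    (F : EuclideanSpace ℝ (Fin n) → ℝ) (hF : F = fun x => ∑ p : Fin P, f p x)
    (K : Set ℕ) (hKinf : K.Infinite)
    (hK : ∀ k ∈ K,
      ‖d k‖ ≤ τ * ζ k ∨
      F (w k + ζ k • d k) > F (w k) - γ * ζ k ^ 2 * ‖d k‖ ^ 2 ∨
      (∃ α : ℝ, 0 < α ∧ α ^ 2 * ‖d k‖ ^ 2 ≤ τ * ζ k ∧
        F (w k + (α / δ) • d k) > F (w k) - γ * (α / δ) ^ 2 * ‖d k‖ ^ 2)) :
    ∃ wbar : EuclideanSpace ℝ (Fin n),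
      (∃ φ : ℕ → ℕ, StrictMono φ ∧
        Tendsto (fun k => w (φ k)) atTop (nhds wbar)) ∧
      gradient F wbar = 0 := by
  have hgradLip : ∀ p, LipschitzWith ⟨L, hL.le⟩ (gradient (f p)) :=
    fun p => lipschitzWith_iff_norm_sub_le.2 (hlip p)
  set G := fun x => ∑ p, gradient (f p) x
  have hFG : ∀ x, HasGradientAt F (G x) x := fun x => hF ▸
    HasGradientAt.fun_sum fun p _ => ((hf p).differentiable one_ne_zero x).hasGradientAt
  have hGLip := LipschitzWith.finset_sum univ fun p _ => hgradLip p
  have he : Tendsto (fun k => ‖d k + G (w k)‖) atTop (𝓝 0) := by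
    have hdG : ∀ k, d k + G (w k) =
        -(∑ i ∈ range P, gradient (f (h k i)) (wt k i) - ∑ p, gradient (f p) (w k)) := by
      intro k
      rw [hd]
      abel
    simpa only [hdG, norm_neg] using tendsto_norm_sum_incremental_sub_sum hgradLip hwbdd
      (fun k => (hζpos k).le) hζto0 hperm hinit hiter
  obtain ⟨C, hC⟩ := hwbdd
  obtain ⟨wbar, hsub, hG0⟩ := exists_subseq_tendsto_and_eq_of_tendsto_inf_principal
    hGLip.continuous (isBounded_iff_forall_norm_le.2 ⟨C, by simpa using hC⟩) hKinf
    (tendsto_gradient_of_stepsize_reduction hFG hGLip hγ.1.le hδ.1 hζpos hζto0 he hK)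
  exact ⟨wbar, hsub, (hFG wbar).gradient.trans hG0⟩

/-- convergence of the nonmonotone NMCMA.
Under Lipschitz continuity of the component gradients, if `{w^k}` is bounded,
`ζ^k → 0`, and along an infinite set `K` of iterations one of the three
stepsize-reduction conditions (i)–(iii) of the NMCMA holds (with the quadratic
sufficient-decrease tests), then `{w^k}` admits a limit point `w̄` with
`∇f(w̄) = 0`, where `f = ∑_{p=1}^P f_p`. -/
theorem stmt_17 {n P : ℕ}
    (f : Fin P → EuclideanSpace ℝ (Fin n) → ℝ)
    (hf : ∀ p, ContDiff ℝ 1 (f p))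
    (L : ℝ) (hL : 0 < L)
    (hlip : ∀ p (u v : EuclideanSpace ℝ (Fin n)),
      ‖gradient (f p) u - gradient (f p) v‖ ≤ L * ‖u - v‖)
    (γ : ℝ) (hγ : γ ∈ Set.Ioo (0 : ℝ) 1)
    (δ : ℝ) (hδ : δ ∈ Set.Ioo (0 : ℝ) 1)
    (τ : ℝ) (hτ : 0 < τ)
    (w : ℕ → EuclideanSpace ℝ (Fin n)) (hwbdd : ∃ C, ∀ k, ‖w k‖ ≤ C)
    (ζ : ℕ → ℝ) (hζpos : ∀ k, 0 < ζ k)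
    (hζto0 : Tendsto ζ atTop (nhds 0))
    (h : ℕ → ℕ → Fin P)
    (hperm : ∀ k, Function.Bijective (fun i : Fin P => h k i.val))
    (wt : ℕ → ℕ → EuclideanSpace ℝ (Fin n))
    (hinit : ∀ k, wt k 0 = w k)
    (hiter : ∀ k, ∀ i, i < P →
      wt k (i + 1) = wt k i - ζ k • gradient (f (h k i)) (wt k i))
    (d : ℕ → EuclideanSpace ℝ (Fin n))
    (hd : ∀ k, d k = -∑ i ∈ Finset.range P, gradient (f (h k i)) (wt k i))
    (F : EuclideanSpace ℝ (Fin n) → ℝ) (hF : F = fun x => ∑ p : Fin P, f p x)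
    (K : Set ℕ) (hKinf : K.Infinite)
    (hK : ∀ k ∈ K,
      ‖d k‖ ≤ τ * ζ k ∨
      F (w k + ζ k • d k) > F (w k) - γ * ζ k ^ 2 * ‖d k‖ ^ 2 ∨
      (∃ α : ℝ, 0 < α ∧ α ^ 2 * ‖d k‖ ^ 2 ≤ τ * ζ k ∧
        F (w k + (α / δ) • d k) > F (w k) - γ * (α / δ) ^ 2 * ‖d k‖ ^ 2)) :
    ∃ wbar : EuclideanSpace ℝ (Fin n),
      (∃ φ : ℕ → ℕ, StrictMono φ ∧
        Tendsto (fun k => w (φ k)) atTop (nhds wbar)) ∧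
      gradient F wbar = 0 :=
  stmt_17_general f hf L hL hlip γ hγ δ hδ τ w hwbdd ζ hζpos hζto0 h hperm wt hinit hiter d hd F hF
    K hKinf hK
end
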